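/- arXiv:2309.10303 — 3 statements merged into one kernel-verified Lean document; each statement's English description precedes it below -/
import Mathlib

section
/- Let r ≥ 1 be an integer and let u, v ∈ ℤ[X] satisfy r·v(X) = u(rX) (such an integer polynomial v of the same degree as u exists precisely when r divides u(0)). Then r·v^{(n)}(1) = u^{(n)}(r) for all n ≥ 1. Consequently, for any finite set A of primes, u is weakly locally nilpotent at r outside A if and only if v is weakly locally nilpotent at 1 outside A ∪ {p prime : p divides r}; and u is nilpotent at r if and only if v is nilpotent at 1. -/
open Polynomial

/-- The `n`-th compositional iterate of the polynomial `u`, evaluated at `r`. -/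
def iterEval (u : Polynomial ℤ) (n : ℕ) (r : ℤ) : ℤ :=
  (fun x => Polynomial.eval x u)^[n] r

/-- `u` is weakly locally nilpotent at `r` outside `A`: for every prime `p ∉ A`
there is `m ≥ 1` with `p ∣ u^{(m)}(r)`. -/
def WeaklyLocallyNilpotentAt (u : Polynomial ℤ) (r : ℤ) (A : Set ℕ) : Prop :=
  ∀ p : ℕ, Nat.Prime p → p ∉ A → ∃ m : ℕ, 1 ≤ m ∧ (p : ℤ) ∣ iterEval u m r

/-- `u` is locally nilpotent at `r`: for every prime `p` there is `m ≥ 1`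
with `p ∣ u^{(m)}(r)`. -/
def LocallyNilpotentAt (u : Polynomial ℤ) (r : ℤ) : Prop :=
  ∀ p : ℕ, Nat.Prime p → ∃ m : ℕ, 1 ≤ m ∧ (p : ℤ) ∣ iterEval u m r

/-- `u` is nilpotent at `r`: some iterate `u^{(n)}(r)` (with `n ≥ 1`) equals `0`. -/
def IsNilpotentAt (u : Polynomial ℤ) (r : ℤ) : Prop :=
  ∃ n : ℕ, 1 ≤ n ∧ iterEval u n r = 0

/-- `u` is nilpotent at `r` with nilpotency index exactly `i`. -/
def NilpotentOfIndex (u : Polynomial ℤ) (r : ℤ) (i : ℕ) : Prop :=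
  1 ≤ i ∧ iterEval u i r = 0 ∧ ∀ m : ℕ, 1 ≤ m → m < i → iterEval u m r ≠ 0

section Rescaling

variable {r : ℤ} {u v : ℤ[X]}

theorem mul_eval_eq_eval_mul (h : C r * v = u.comp (C r * X)) (x : ℤ) :
    r * v.eval x = u.eval (r * x) := by
  simpa using congrArg (eval x) h

theorem mul_iterEval (h : C r * v = u.comp (C r * X)) (n : ℕ) (x : ℤ) :
    r * iterEval v n x = iterEval u n (r * x) :=
  Function.Semiconj.iterate_right (f := (r * ·)) (ga := (eval · v)) (gb := (eval · u))
    (mul_eval_eq_eval_mul h) n x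

theorem weaklyLocallyNilpotentAt_mul_iff (h : C r * v = u.comp (C r * X)) (x : ℤ) (A : Set ℕ) :
    WeaklyLocallyNilpotentAt u (r * x) A ↔
      WeaklyLocallyNilpotentAt v x (A ∪ {p : ℕ | (p : ℤ) ∣ r}) := by
  simp only [WeaklyLocallyNilpotentAt, Set.mem_union, Set.mem_ofPred_eq, not_or]
  constructor
  · rintro hu p hp ⟨hpA, hpr⟩
    obtain ⟨m, hm, hdvd⟩ := hu p hp hpA
    rw [← mul_iterEval h] at hdvd
    exact ⟨m, hm, ((Nat.prime_iff_prime_int.mp hp).dvd_mul.mp hdvd).resolve_left hpr⟩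
  · intro hv p hp hpA
    by_cases hpr : (p : ℤ) ∣ r
    · exact ⟨1, le_rfl, by rw [← mul_iterEval h]; exact hpr.mul_right _⟩
    · obtain ⟨m, hm, hdvd⟩ := hv p hp ⟨hpA, hpr⟩
      exact ⟨m, hm, by rw [← mul_iterEval h]; exact hdvd.mul_left _⟩

theorem isNilpotentAt_mul_iff (h : C r * v = u.comp (C r * X)) (hr : r ≠ 0) (x : ℤ) :
    IsNilpotentAt u (r * x) ↔ IsNilpotentAt v x := by
  simp only [IsNilpotentAt, ← mul_iterEval h, mul_eq_zero, hr, false_or]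

end Rescaling

theorem reduction_of_polynomials (r : ℤ) (hr : 1 ≤ r) (u v : Polynomial ℤ)
    (h : Polynomial.C r * v = u.comp (Polynomial.C r * Polynomial.X)) :
    (∀ n : ℕ, 1 ≤ n → r * iterEval v n 1 = iterEval u n r) ∧
    (∀ A : Set ℕ, A.Finite → (∀ p ∈ A, Nat.Prime p) →
      (WeaklyLocallyNilpotentAt u r A ↔
        WeaklyLocallyNilpotentAt v 1 (A ∪ {p : ℕ | (p : ℤ) ∣ r}))) ∧
    (IsNilpotentAt u r ↔ IsNilpotentAt v 1) := by
  refine ⟨fun n _ => by simpa using mul_iterEval h n 1, fun A _ _ => ?_, ?_⟩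
  · simpa using weaklyLocallyNilpotentAt_mul_iff h 1 A
  · simpa using isNilpotentAt_mul_iff h (by positivity) 1
end

section
/- Let u ∈ ℤ[X] be nonconstant. Then u is locally nilpotent at 1 if and only if u has one of the following forms: (1) u(X) = (X−1)·p(X) for some nonzero p ∈ ℤ[X]; (2) u(X) = −2X + 4 + p(X)·(X−1)(X−2) for some p ∈ ℤ[X]; (3) u(X) = −2X² + 7X − 3 + p(X)·(X−1)(X−2)(X−3) for some p ∈ ℤ[X]; (4) u(X) = X + 1. Moreover, polynomials of forms (1), (2), (3) are nilpotent at 1 of nilpotency index 1, 2, 3 respectively, while X + 1 is not nilpotent at 1. -/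
open Polynomial

/-!
Write `aₙ = u^{(n)}(1)`. Since `x - y ∣ u(x) - u(y)`, a congruence `a_{j+g} ≡ a_j (mod p)`
propagates to all later terms, so under local nilpotence a prime dividing `a_k - a_j` with `j < k`
already divides some `a_m` with `m < k`. If `a_i = i + 1` for all `i < k`, this bounds the prime
factors of each `a_k - i` (`1 ≤ i ≤ k`) by `k`, while the same divisibility gives
`g ∣ a_k - (k + 1)` for `g < k`; elementary arithmetic then forces `a_k = k + 1`, or `a_k = 0`
with `k ≤ 3`. So the orbit of `1` is either `1, 2, 3, …`, whence `u = X + 1`, or `1, …, k, 0`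
with `k ≤ 3`, and interpolating `u` at `1, …, k` gives the forms (1)–(3).
-/

theorem Int.isUnit_of_forall_prime_not_dvd {z : ℤ} (h : ∀ p : ℕ, p.Prime → ¬ (p : ℤ) ∣ z) :
    IsUnit z := by
  rw [Int.isUnit_iff_natAbs_eq]
  by_contra hz
  obtain ⟨p, hp, hpz⟩ := Nat.exists_prime_and_dvd hz
  exact h p hp (Int.dvd_natAbs.mp (Int.natCast_dvd_natCast.mpr hpz))

theorem Polynomial.prod_X_sub_C_dvd_of_forall_isRoot {R : Type*} [CommRing R] [IsDomain R]
    {q : R[X]} (s : Finset R) (h : ∀ a ∈ s, q.IsRoot a) : ∏ a ∈ s, (X - C a) ∣ q := by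
  rcases eq_or_ne q 0 with rfl | hq
  · exact dvd_zero _
  rw [Finset.prod_eq_multiset_prod, Multiset.prod_X_sub_C_dvd_iff_le_roots hq]
  exact (Multiset.le_iff_subset s.nodup).2 fun a ha => (mem_roots hq).2 (h a ha)

theorem Polynomial.exists_eq_add_mul_prod_of_eval_eq {R : Type*} [CommRing R] [IsDomain R]
    {u v : R[X]} (s : Finset R) (h : ∀ a ∈ s, u.eval a = v.eval a) :
    ∃ p, u = v + p * ∏ a ∈ s, (X - C a) := by
  obtain ⟨p, hp⟩ := prod_X_sub_C_dvd_of_forall_isRoot (q := u - v) s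
    fun a ha => by simp [h a ha]
  exact ⟨p, by linear_combination hp⟩

section iterEval

variable (u : ℤ[X])

@[simp] theorem iterEval_zero (r : ℤ) : iterEval u 0 r = r := rfl

theorem iterEval_succ (n : ℕ) (r : ℤ) : iterEval u (n + 1) r = u.eval (iterEval u n r) :=
  Function.iterate_succ_apply' _ _ _

theorem sub_dvd_iterEval_succ_sub (i j : ℕ) (r : ℤ) :
    iterEval u i r - iterEval u j r ∣ iterEval u (i + 1) r - iterEval u (j + 1) r := by
  rw [iterEval_succ, iterEval_succ]
  exact sub_dvd_eval_sub _ _ u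

variable {u}

theorem dvd_iterEval_add_sub_of_le {n r : ℤ} {j g : ℕ}
    (h : n ∣ iterEval u (j + g) r - iterEval u j r) {m : ℕ} (hm : j ≤ m) :
    n ∣ iterEval u (m + g) r - iterEval u m r := by
  induction m, hm using Nat.le_induction with
  | base => exact h
  | succ m _ ih =>
    simpa only [add_right_comm m 1 g] using ih.trans (sub_dvd_iterEval_succ_sub u _ _ r)

theorem exists_lt_dvd_iterEval_of_dvd_sub {n r : ℤ} {j g : ℕ} (hg : 0 < g)
    (h : n ∣ iterEval u (j + g) r - iterEval u j r) (m : ℕ) (hm : n ∣ iterEval u m r) :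
    ∃ m' < j + g, n ∣ iterEval u m' r := by
  induction m using Nat.strong_induction_on with
  | _ m ih =>
    by_cases hlt : m < j + g
    · exact ⟨m, hlt, hm⟩
    obtain ⟨m, rfl⟩ : ∃ m', m = m' + g := ⟨m - g, by omega⟩
    have hper := dvd_iterEval_add_sub_of_le h (m := m) (by omega)
    exact ih m (by omega) (by simpa using dvd_sub hm hper)

theorem LocallyNilpotentAt.exists_lt_dvd_iterEval {r : ℤ} (hu : LocallyNilpotentAt u r)
    {p : ℕ} (hp : p.Prime) {j k : ℕ} (hjk : j < k)
    (h : (p : ℤ) ∣ iterEval u k r - iterEval u j r) : ∃ m < k, (p : ℤ) ∣ iterEval u m r := by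
  obtain ⟨m, -, hm⟩ := hu p hp
  obtain ⟨g, rfl⟩ : ∃ g, k = j + g := ⟨k - j, by omega⟩
  exact exists_lt_dvd_iterEval_of_dvd_sub (by omega) h m hm

end iterEval

section OrbitStep

variable {k : ℕ} {y : ℤ}

theorem eq_succ_or_eq_zero_of_forall_dvd_of_le_three (hk₀ : 0 < k) (hk : k ≤ 3)
    (hA : ∀ g : ℕ, 0 < g → g < k → (g : ℤ) ∣ y - (k + 1))
    (hB : ∀ i : ℕ, 0 < i → i ≤ k → ∀ p : ℕ, p.Prime → (p : ℤ) ∣ y - i → p ≤ k) :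
    y = k + 1 ∨ y = 0 := by
  have hne : ∀ i : ℕ, 0 < i → i ≤ k → y ≠ i := by
    rintro i hi hik rfl
    obtain ⟨p, hkp, hp⟩ := Nat.exists_infinite_primes (k + 1)
    have := hB i hi hik p hp (by simp)
    omega
  have unit : ∀ i : ℕ, 0 < i → i ≤ k → (2 ≤ k → ¬ (2 : ℤ) ∣ y - i) →
      (3 ≤ k → ¬ (3 : ℤ) ∣ y - i) → y - i = 1 ∨ y - i = -1 := by
    intro i hi hik h2 h3
    refine Int.isUnit_iff.mp (Int.isUnit_of_forall_prime_not_dvd fun p hp hpd => ?_)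
    have hpk := hB i hi hik p hp hpd
    have : p ≤ 3 := hpk.trans hk
    interval_cases p
    · exact Nat.not_prime_zero hp
    · exact Nat.not_prime_one hp
    · exact h2 hpk hpd
    · exact h3 hpk hpd
  interval_cases k <;> push_cast at *
  · have := unit 1 one_pos le_rfl (by norm_num) (by norm_num)
    omega
  · have h1 := hne 1 one_pos (by norm_num)
    have h2 := hne 2 two_pos le_rfl
    by_cases h : (2 : ℤ) ∣ y - 1
    · have := unit 2 two_pos le_rfl (fun _ => by push_cast; omega) (by norm_num)
      omega
    · have := unit 1 one_pos (by norm_num) (fun _ => by push_cast; omega) (by norm_num)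
      omega
  · have h2 := hne 2 two_pos (by norm_num)
    have h4 : (2 : ℤ) ∣ y - 4 := by exact_mod_cast hA 2 two_pos (by norm_num)
    by_cases h : (3 : ℤ) ∣ y - 1
    · have := unit 3 (by norm_num) le_rfl (fun _ => by push_cast; omega)
        (fun _ => by push_cast; omega)
      omega
    · have := unit 1 one_pos (by norm_num) (fun _ => by push_cast; omega)
        (fun _ => by push_cast; omega)
      omega

theorem eq_succ_of_forall_dvd_of_four_le (hk : 4 ≤ k)
    (hA : ∀ g : ℕ, 0 < g → g < k → (g : ℤ) ∣ y - (k + 1))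
    (hB : ∀ i : ℕ, 0 < i → i ≤ k → ∀ p : ℕ, p.Prime → (p : ℤ) ∣ y - i → p ≤ k) :
    y = k + 1 := by
  have h2 : (2 : ℤ) ∣ y - (k + 1) := by exact_mod_cast hA 2 (by omega) (by omega)
  have h3 : (3 : ℤ) ∣ y - (k + 1) := by exact_mod_cast hA 3 (by omega) (by omega)
  have not_dvd_one : ∀ p : ℕ, p.Prime → ¬ (p : ℤ) ∣ 1 := fun p hp h =>
    hp.one_lt.ne' (by exact_mod_cast Int.eq_one_of_dvd_one (by positivity) h)
  have eq_k_of_dvd : ∀ p : ℕ, p.Prime → (p : ℤ) ∣ y - k → p = k := by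
    intro p hp hpd
    refine (hB k (by omega) le_rfl p hp hpd).lt_or_eq.resolve_left fun hlt => not_dvd_one p hp ?_
    simpa using dvd_sub hpd (hA p hp.pos hlt)
  by_cases hkd : (k : ℤ) ∣ y - k
  · have hk5 : 5 ≤ k := by
      rcases hk.eq_or_lt with rfl | hlt
      · push_cast at hkd; omega
      · exact hlt
    obtain ⟨c, hc⟩ : (4 : ℤ) ∣ y - (k + 1) := by exact_mod_cast hA 4 (by omega) (by omega)
    have hy : y - ((k - 1 : ℕ) : ℤ) = 2 * (2 * c + 1) := by
      push_cast [Nat.cast_sub (by omega : 1 ≤ k)]; linarith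
    -- A prime factor of `2c + 1` is not `k`, which divides `y - k`, nor below `k`,
    -- as it would then divide `2`.
    have hu := Int.isUnit_of_forall_prime_not_dvd fun p hp hpd => by
      have hpk := hB (k - 1) (by omega) (by omega) p hp (hy ▸ hpd.mul_left 2)
      rcases hpk.lt_or_eq with hlt | rfl
      · have h2 : (p : ℤ) ∣ 2 := by
          have := dvd_sub (hpd.mul_left 2) (hA p hp.pos hlt)
          rwa [hc, show 2 * (2 * c + 1) - 4 * c = 2 by ring] at this
        have hp2 : p = 2 := (Nat.prime_dvd_prime_iff_eq hp Nat.prime_two).mp (by exact_mod_cast h2)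
        subst hp2
        push_cast at hpd
        omega
      · refine not_dvd_one p hp ?_
        have := dvd_sub (hpd.mul_left 2) hkd
        rwa [show 2 * (2 * c + 1) - (y - p) = 1 by linarith] at this
    rcases Int.isUnit_iff.mp hu with h | h <;> omega
  · have hu := Int.isUnit_of_forall_prime_not_dvd fun p hp hpd => hkd (eq_k_of_dvd p hp hpd ▸ hpd)
    rcases Int.isUnit_iff.mp hu with h | h <;> omega

end OrbitStep

section OrbitAtOne

variable {u : ℤ[X]}

theorem LocallyNilpotentAt.iterEval_one_eq_succ_or_eq_zero (hu : LocallyNilpotentAt u 1)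
    {k : ℕ} (hk : 0 < k) (horb : ∀ i < k, iterEval u i 1 = i + 1) :
    iterEval u k 1 = k + 1 ∨ (k ≤ 3 ∧ iterEval u k 1 = 0) := by
  have hA : ∀ g : ℕ, 0 < g → g < k → (g : ℤ) ∣ iterEval u k 1 - (k + 1) := by
    intro g hg hgk
    have h := sub_dvd_iterEval_succ_sub u (k - 1) (k - 1 - g) 1
    rw [horb (k - 1) (by omega), horb (k - 1 - g) (by omega), show k - 1 + 1 = k by omega,
      show k - 1 - g + 1 = k - g by omega, horb (k - g) (by omega)] at h
    have hsub : ((k - 1 : ℕ) : ℤ) + 1 - (((k - 1 - g : ℕ) : ℤ) + 1) = g := by omega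
    rw [hsub] at h
    rw [show iterEval u k 1 - (k + 1) = iterEval u k 1 - (((k - g : ℕ) : ℤ) + 1) - g by
      push_cast [Nat.cast_sub hgk.le]; ring]
    exact dvd_sub h dvd_rfl
  have hB : ∀ i : ℕ, 0 < i → i ≤ k → ∀ p : ℕ, p.Prime →
      (p : ℤ) ∣ iterEval u k 1 - i → p ≤ k := by
    intro i hi hik p hp hpd
    have hprev : iterEval u (i - 1) 1 = i := by rw [horb _ (by omega)]; omega
    obtain ⟨m, hmk, hm⟩ := hu.exists_lt_dvd_iterEval hp (j := i - 1) (by omega) (hprev ▸ hpd)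
    rw [horb m hmk] at hm
    have := Int.le_of_dvd (by positivity) hm
    omega
  rcases le_or_gt k 3 with hk3 | hk4
  · exact (eq_succ_or_eq_zero_of_forall_dvd_of_le_three hk hk3 hA hB).imp_right (⟨hk3, ·⟩)
  · exact .inl (eq_succ_of_forall_dvd_of_four_le hk4 hA hB)

theorem LocallyNilpotentAt.iterEval_one_cases (hu : LocallyNilpotentAt u 1) :
    (∀ n : ℕ, iterEval u n 1 = n + 1) ∨
      ∃ k, 0 < k ∧ k ≤ 3 ∧ iterEval u k 1 = 0 ∧ ∀ i < k, iterEval u i 1 = i + 1 := by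
  classical
  by_cases h : ∃ n, iterEval u n 1 ≠ n + 1
  · have horb : ∀ i < Nat.find h, iterEval u i 1 = i + 1 := fun i hi =>
      not_not.mp (Nat.find_min h hi)
    have hk : 0 < Nat.find h := Nat.pos_of_ne_zero fun h0 => Nat.find_spec h (by simp [h0])
    rcases hu.iterEval_one_eq_succ_or_eq_zero hk horb with hsucc | ⟨hk3, hzero⟩
    · exact absurd hsucc (Nat.find_spec h)
    · exact .inr ⟨_, hk, hk3, hzero, horb⟩
  · exact .inl (by simpa using h)

end OrbitAtOne

theorem NilpotentOfIndex.locallyNilpotentAt {u : ℤ[X]} {r : ℤ} {i : ℕ}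
    (h : NilpotentOfIndex u r i) : LocallyNilpotentAt u r :=
  fun _ _ => ⟨i, h.1, h.2.1 ▸ dvd_zero _⟩

theorem nilpotentOfIndex_X_sub_one_mul (p : ℤ[X]) : NilpotentOfIndex ((X - 1) * p) 1 1 :=
  ⟨le_rfl, by simp [iterEval], fun _ hm hm1 => absurd hm1 (not_lt.2 hm)⟩

theorem nilpotentOfIndex_two (p : ℤ[X]) :
    NilpotentOfIndex (-2 * X + 4 + p * (X - 1) * (X - 2)) 1 2 := by
  refine ⟨one_le_two, by simp [iterEval], fun m hm hm2 => ?_⟩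
  obtain rfl : m = 1 := by omega
  simp [iterEval]

theorem nilpotentOfIndex_three (p : ℤ[X]) :
    NilpotentOfIndex (-2 * X ^ 2 + 7 * X - 3 + p * (X - 1) * (X - 2) * (X - 3)) 1 3 := by
  refine ⟨by norm_num, by simp [iterEval], fun m hm hm3 => ?_⟩
  interval_cases m <;> simp [iterEval]

theorem iterEval_X_add_one (n : ℕ) (r : ℤ) : iterEval (X + 1) n r = r + n := by
  induction n with
  | zero => simp
  | succ n ih => rw [iterEval_succ, ih]; simp; ring

theorem locallyNilpotentAt_X_add_one_one : LocallyNilpotentAt (X + 1) 1 := fun p hp =>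
  ⟨p - 1, by have := hp.two_le; omega, by simp [iterEval_X_add_one, Nat.cast_sub hp.one_le]⟩

theorem not_isNilpotentAt_X_add_one {r : ℤ} (hr : 0 ≤ r) : ¬ IsNilpotentAt (X + 1) r := by
  rintro ⟨n, hn, h⟩
  rw [iterEval_X_add_one] at h
  omega

theorem eq_X_add_one_of_forall_iterEval_one {u : ℤ[X]} (h : ∀ n : ℕ, iterEval u n 1 = n + 1) :
    u = X + 1 := by
  refine eq_of_infinite_eval_eq _ _ (Set.infinite_of_injective_forall_mem
    (f := fun n : ℕ => (n : ℤ) + 1) (fun a b hab => by simpa using hab) fun n => ?_)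
  have := iterEval_succ u n 1
  rw [h, h] at this
  simp only [Set.mem_ofPred_eq, eval_add, eval_X, eval_one, ← this]
  push_cast
  ring

theorem forms_of_locallyNilpotentAt_one {u : ℤ[X]} (hu : 0 < u.natDegree)
    (h : LocallyNilpotentAt u 1) :
    (∃ p : ℤ[X], p ≠ 0 ∧ u = (X - 1) * p) ∨
      (∃ p : ℤ[X], u = -2 * X + 4 + p * (X - 1) * (X - 2)) ∨
      (∃ p : ℤ[X], u = -2 * X ^ 2 + 7 * X - 3 + p * (X - 1) * (X - 2) * (X - 3)) ∨
      u = X + 1 := by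
  rcases h.iterEval_one_cases with horb | ⟨k, hk, hk3, hzero, horb⟩
  · exact .inr <| .inr <| .inr <| eq_X_add_one_of_forall_iterEval_one horb
  have heval : ∀ i < k, u.eval (i + 1 : ℤ) = iterEval u (i + 1) 1 := fun i hi => by
    rw [iterEval_succ, horb i hi]
  interval_cases k
  · have h1 : u.eval 1 = 0 := by simpa [hzero] using heval 0 one_pos
    obtain ⟨p, hp⟩ := exists_eq_add_mul_prod_of_eval_eq (u := u) (v := 0) {1} (by simp [h1])
    refine .inl ⟨p, ?_, by simpa [mul_comm] using hp⟩
    rintro rfl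
    simp [hp] at hu
  · have h1 : u.eval 1 = 2 := by simpa [horb 1 one_lt_two] using heval 0 two_pos
    have h2 : u.eval 2 = 0 := by simpa [hzero] using heval 1 one_lt_two
    obtain ⟨p, hp⟩ := exists_eq_add_mul_prod_of_eval_eq (u := u) (v := -2 * X + 4) {1, 2}
      (by simp [h1, h2])
    exact .inr <| .inl ⟨p, by simpa [mul_assoc] using hp⟩
  · have h1 : u.eval 1 = 2 := by simpa [horb 1 (by norm_num)] using heval 0 (by norm_num)
    have h2 : u.eval 2 = 3 := by simpa [horb 2 (by norm_num)] using heval 1 (by norm_num)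
    have h3 : u.eval 3 = 0 := by simpa [hzero] using heval 2 (by norm_num)
    obtain ⟨p, hp⟩ := exists_eq_add_mul_prod_of_eval_eq (u := u) (v := -2 * X ^ 2 + 7 * X - 3)
      {1, 2, 3} (by simp [h1, h2, h3])
    exact .inr <| .inr <| .inl ⟨p, by simpa [mul_assoc] using hp⟩

theorem locallyNilpotentAt_one_of_forms {u : ℤ[X]}
    (h : (∃ p : ℤ[X], p ≠ 0 ∧ u = (X - 1) * p) ∨
      (∃ p : ℤ[X], u = -2 * X + 4 + p * (X - 1) * (X - 2)) ∨
      (∃ p : ℤ[X], u = -2 * X ^ 2 + 7 * X - 3 + p * (X - 1) * (X - 2) * (X - 3)) ∨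
      u = X + 1) :
    LocallyNilpotentAt u 1 := by
  rcases h with ⟨p, -, rfl⟩ | ⟨p, rfl⟩ | ⟨p, rfl⟩ | rfl
  · exact (nilpotentOfIndex_X_sub_one_mul p).locallyNilpotentAt
  · exact (nilpotentOfIndex_two p).locallyNilpotentAt
  · exact (nilpotentOfIndex_three p).locallyNilpotentAt
  · exact locallyNilpotentAt_X_add_one_one

theorem locally_nilpotent_at_one_classification (u : Polynomial ℤ) (hu : 0 < u.natDegree) :
    (LocallyNilpotentAt u 1 ↔
      ((∃ p : Polynomial ℤ, p ≠ 0 ∧ u = (X - 1) * p) ∨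
       (∃ p : Polynomial ℤ, u = -2 * X + 4 + p * (X - 1) * (X - 2)) ∨
       (∃ p : Polynomial ℤ, u = -2 * X ^ 2 + 7 * X - 3 + p * (X - 1) * (X - 2) * (X - 3)) ∨
       u = X + 1)) ∧
    (∀ p : Polynomial ℤ, p ≠ 0 → NilpotentOfIndex ((X - 1) * p) 1 1) ∧
    (∀ p : Polynomial ℤ, NilpotentOfIndex (-2 * X + 4 + p * (X - 1) * (X - 2)) 1 2) ∧
    (∀ p : Polynomial ℤ,
      NilpotentOfIndex (-2 * X ^ 2 + 7 * X - 3 + p * (X - 1) * (X - 2) * (X - 3)) 1 3) ∧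
    ¬ IsNilpotentAt (X + 1) 1 :=
  ⟨⟨forms_of_locallyNilpotentAt_one hu, locallyNilpotentAt_one_of_forms⟩,
    fun p _ => nilpotentOfIndex_X_sub_one_mul p, nilpotentOfIndex_two, nilpotentOfIndex_three,
    not_isNilpotentAt_X_add_one zero_le_one⟩
end

section
/- If u ∈ ℤ[X] is nilpotent at 0, i.e. u^{(n)}(0) = 0 for some n ≥ 1, then u^{(2)}(0) = 0; in other words, the nilpotency index of any polynomial nilpotent at 0 is at most 2. -/
/-!
For `f : ℤ → ℤ` with `a - b ∣ f a - f b` (e.g. a polynomial map), the steps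
`d k = f^[k+1] x - f^[k] x` along an orbit satisfy `d k ∣ d (k + 1)`. On a periodic orbit they
therefore all divide each other and have a common absolute value. If two consecutive steps have
opposite signs, the orbit meets a point of period 2, and then `x` itself has period 2. Otherwise all
steps are equal, and since they sum to `f^[n] x - x = 0` over a period, `x` is a fixed point.
-/

open Function Polynomial

section Ring

variable {R : Type*} [Ring R] {f : R → R}

theorem sub_dvd_iterate_sub_iterate (hf : ∀ a b, a - b ∣ f a - f b) (a b : R) (k : ℕ) :
    a - b ∣ f^[k] a - f^[k] b := by
  induction k with
  | zero => simp
  | succ k ih =>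
    rw [iterate_succ_apply', iterate_succ_apply']
    exact ih.trans (hf _ _)

theorem apply_sub_self_dvd_iterate_succ_sub_iterate (hf : ∀ a b, a - b ∣ f a - f b)
    (y : R) (k : ℕ) :
    f y - y ∣ f^[k + 1] y - f^[k] y := by
  rw [iterate_succ_apply]
  exact sub_dvd_iterate_sub_iterate hf (f y) y k

end Ring

namespace Int

variable {f : ℤ → ℤ} {n : ℕ} {x : ℤ}

theorem natAbs_iterate_succ_sub_iterate_eq (hf : ∀ a b, a - b ∣ f a - f b)
    (hx : IsPeriodicPt f n x) (hn : 0 < n) (k : ℕ) :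
    (f^[k + 1] x - f^[k] x).natAbs = (f x - x).natAbs := by
  apply natAbs_eq_of_dvd_dvd
  · have h := apply_sub_self_dvd_iterate_succ_sub_iterate hf (f^[k] x) (n * k - k)
    rw [iterate_succ_apply']
    rwa [iterate_succ_apply', ← iterate_add_apply,
      Nat.sub_add_cancel (Nat.le_mul_of_pos_left k hn), (hx.mul_const k).eq] at h
  · exact apply_sub_self_dvd_iterate_succ_sub_iterate hf x k

theorem isPeriodicPt_two_of_sub_dvd_sub (hf : ∀ a b, a - b ∣ f a - f b)
    (hx : IsPeriodicPt f n x) (hn : 0 < n) : IsPeriodicPt f 2 x := by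
  set d : ℕ → ℤ := fun k ↦ f^[k + 1] x - f^[k] x with hd
  by_cases hflip : ∃ k, d (k + 1) = -d k
  · obtain ⟨k, hk⟩ := hflip
    refine isPeriodicPt_of_mem_periodicPts_of_isPeriodicPt_iterate (n := k)
      (mk_mem_periodicPts hn hx) ?_
    simp only [hd, iterate_succ_apply'] at hk
    change f (f (f^[k] x)) = f^[k] x
    linarith
  · push Not at hflip
    have hconst : ∀ k, d k = d 0 := by
      intro k
      induction k with
      | zero => rfl
      | succ k ih =>
        have habs : (d (k + 1)).natAbs = (d k).natAbs := by
          simp only [hd]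
          rw [natAbs_iterate_succ_sub_iterate_eq hf hx hn,
            natAbs_iterate_succ_sub_iterate_eq hf hx hn]
        rcases natAbs_eq_natAbs_iff.mp habs with h | h
        · rw [h, ih]
        · exact absurd h (hflip k)
    have hsum : (n : ℤ) * d 0 = 0 := by
      calc (n : ℤ) * d 0 = ∑ k ∈ Finset.range n, d k := by simp [hconst]
        _ = f^[n] x - x := Finset.sum_range_sub (f^[·] x) n
        _ = 0 := sub_eq_zero.mpr hx.eq
    have hfix : IsFixedPt f x := by
      simpa [IsFixedPt, hd, hn.ne', sub_eq_zero] using hsum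
    exact hfix.isPeriodicPt 2

end Int

theorem nilpotency_index_at_zero_le_two (u : Polynomial ℤ) (h : IsNilpotentAt u 0) :
    iterEval u 2 0 = 0 := by
  obtain ⟨n, hn, hu⟩ := h
  exact Int.isPeriodicPt_two_of_sub_dvd_sub (fun a b ↦ sub_dvd_eval_sub a b u) hu hn
end
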